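/- Let m | n be positive integers with mn odd and mn > 25, and let 1 ≤ d ≤ 4. Then there is no elliptic curve E over F_{2^d} such that E(F_{2^d}) contains a subgroup isomorphic to Z/mZ × Z/nZ. -/

import Mathlib

/-!
Over `𝔽_q` with `q = 2 ^ d ≤ 16` every `x` carries at most two points, so `#E ≤ 2q + 1 ≤ 33`,
while `#E` is a multiple of the odd number `mn ≥ 27`. If `a₁ ≠ 0`, the point with
`x = a₃ / a₁` has order two, so `2mn ∣ #E`, which is impossible. If `a₁ = 0`, the curve is
`y² + a₃y = f(x)` and the fibre over `x` has `1 + ν (f x)` points, where `ν` is the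
`±1`-character whose kernel is the image of the additive map `y ↦ y² + a₃y`. Squaring
`∑ ν (f x)` turns it into a sum of characters of the quadratic form `x ↦ u x² + u² x`, whose
radical has at most four elements; this gives the Hasse bound `(#E - 1 - q)² ≤ 4q`, hence
`#E ≤ 25`.
-/

open WeierstrassCurve

section SignChar

variable {G : Type*} [AddGroup G]

open Classical in
noncomputable def AddSubgroup.signChar (H : AddSubgroup G) (hH : H.index = 2) : AddChar G ℤ where
  toFun x := if x ∈ H then 1 else -1
  map_zero_eq_one' := if_pos H.zero_mem
  map_add_eq_mul' a b := by
    rw [AddSubgroup.add_mem_iff_of_index_two hH]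
    by_cases ha : a ∈ H <;> by_cases hb : b ∈ H <;> simp [ha, hb]

lemma AddSubgroup.signChar_ne_zero (H : AddSubgroup G) (hH : H.index = 2) :
    H.signChar hH ≠ 0 := by
  obtain ⟨x, hx⟩ : ∃ x, x ∉ H := by
    by_contra! h
    rw [(AddSubgroup.eq_top_iff' H).mpr h, AddSubgroup.index_top] at hH
    omega
  exact AddChar.ne_zero_iff.mpr ⟨x, by simp [signChar, hx]⟩

lemma AddChar.apply_le_one (ν : AddChar G ℤ) (x : G) : ν x ≤ 1 := by
  have : ν x * ν (-x) = 1 := by rw [← map_add_eq_mul, add_neg_cancel, map_zero_eq_one]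
  rcases Int.eq_one_or_neg_one_of_mul_eq_one this with h | h <;> rw [h]; norm_num

end SignChar

namespace CharTwo

variable {F : Type*} [Field F] [CharP F 2]

def sqAddMulHom (c : F) : F →+ F :=
  AddMonoidHom.mk' (fun y => y ^ 2 + c * y) fun a b => by
    linear_combination a * b * two_eq_zero (R := F)

lemma natCard_ker_sqAddMulHom {c : F} (hc : c ≠ 0) : Nat.card (sqAddMulHom c).ker = 2 := by
  have hker : ((sqAddMulHom c).ker : Set F) = {0, c} := by
    ext y
    simp only [SetLike.mem_coe, AddMonoidHom.mem_ker, sqAddMulHom, AddMonoidHom.mk'_apply,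
      Set.mem_insert_iff, Set.mem_singleton_iff]
    rw [show y ^ 2 + c * y = y * (y + c) by ring, mul_eq_zero, CharTwo.add_eq_zero]
  rw [← SetLike.coe_sort_coe, hker, Nat.card_coe_set_eq, Set.ncard_pair hc.symm]

lemma index_range_sqAddMulHom [Finite F] {c : F} (hc : c ≠ 0) :
    (sqAddMulHom c).range.index = 2 := by
  rw [AddSubgroup.index_range, natCard_ker_sqAddMulHom hc]

lemma natCard_sqAddMulHom_fiber [Finite F] {c : F} (hc : c ≠ 0) (r : F) :
    (Nat.card {y : F // y ^ 2 + c * y = r} : ℤ)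
      = 1 + (sqAddMulHom c).range.signChar (index_range_sqAddMulHom hc) r := by
  by_cases hr : r ∈ (sqAddMulHom c).range
  · obtain ⟨y₀, rfl⟩ := hr
    have : Nat.card {y : F // y ^ 2 + c * y = sqAddMulHom c y₀} = 2 :=
      (Nat.card_congr ((sqAddMulHom c).fiberEquivKer y₀)).trans (natCard_ker_sqAddMulHom hc)
    simp [this, AddSubgroup.signChar]
  · have : IsEmpty {y : F // y ^ 2 + c * y = r} := ⟨fun ⟨y, hy⟩ => hr ⟨y, hy⟩⟩
    simp [AddSubgroup.signChar, hr]

def cubePolarHom (u : F) : F →+ F :=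
  AddMonoidHom.mk' (fun x => u * x ^ 2 + u ^ 2 * x) fun a b => by
    linear_combination u * a * b * two_eq_zero (R := F)

lemma pow_three_eq_of_cubePolarHom_trivial [Finite F] {ν : AddChar F ℤ} (hν : ν ≠ 0) {u v : F}
    (hu : ν.compAddMonoidHom (cubePolarHom u) = 0) (hv : ν.compAddMonoidHom (cubePolarHom v) = 0)
    (hu₀ : u ≠ 0) (hv₀ : v ≠ 0) : u ^ 3 = v ^ 3 := by
  obtain ⟨t, ht⟩ := surjective_frobenius F 2 (v / u)
  rw [frobenius_def] at ht
  have hut : u * t ^ 2 = v := by rw [ht]; field_simp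
  have hcoef : u ^ 2 * t = v ^ 2 := by
    by_contra hne
    have hne' : u ^ 2 * t + v ^ 2 ≠ 0 := fun h => hne (CharTwo.add_eq_zero.mp h)
    refine hν (AddChar.eq_zero_iff.mpr fun y => ?_)
    set x := (u ^ 2 * t + v ^ 2)⁻¹ * y
    have hx : (u ^ 2 * t + v ^ 2) * x = y := mul_inv_cancel_left₀ hne' y
    have hy : y = cubePolarHom u (t * x) + cubePolarHom v x := by
      simp only [cubePolarHom, AddMonoidHom.mk'_apply]
      linear_combination -hx - x ^ 2 * hut - v * x ^ 2 * two_eq_zero (R := F)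
    rw [hy, AddChar.map_add_eq_mul, ← AddChar.compAddMonoidHom_apply,
      ← AddChar.compAddMonoidHom_apply, hu, hv, AddChar.zero_apply, AddChar.zero_apply, mul_one]
  have : u ^ 3 * v = v ^ 3 * v := by
    calc u ^ 3 * v = (u ^ 2 * t) ^ 2 := by rw [← hut]; ring
      _ = v ^ 3 * v := by rw [hcoef]; ring
  exact mul_right_cancel₀ hv₀ this

open Classical in
lemma card_cubePolarHom_trivial_le [Fintype F] {ν : AddChar F ℤ} (hν : ν ≠ 0) :
    (Finset.univ.filter fun u => ν.compAddMonoidHom (cubePolarHom u) = 0).card ≤ 4 := by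
  set U := Finset.univ.filter fun u => ν.compAddMonoidHom (cubePolarHom u) = 0
  by_cases h : ∃ v ∈ U, v ≠ 0
  · obtain ⟨v, hvU, hv₀⟩ := h
    have hsub : U ⊆ insert 0 (Polynomial.nthRoots 3 (v ^ 3)).toFinset := by
      intro u huU
      rcases eq_or_ne u 0 with rfl | hu₀
      · exact Finset.mem_insert_self _ _
      refine Finset.mem_insert_of_mem (Multiset.mem_toFinset.mpr ?_)
      rw [Polynomial.mem_nthRoots three_pos]
      exact pow_three_eq_of_cubePolarHom_trivial hν (Finset.mem_filter.mp huU).2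
        (Finset.mem_filter.mp hvU).2 hu₀ hv₀
    calc U.card ≤ _ := Finset.card_le_card hsub
      _ ≤ (Polynomial.nthRoots 3 (v ^ 3)).toFinset.card + 1 := Finset.card_insert_le _ _
      _ ≤ 4 := by
        have := (Multiset.toFinset_card_le _).trans (Polynomial.card_nthRoots 3 (v ^ 3))
        omega
  · push Not at h
    have hsub : U ⊆ {0} := fun u hu => Finset.mem_singleton.mpr (h u hu)
    exact (Finset.card_le_card hsub).trans (by simp)

theorem sq_sum_addChar_cubic_le [Fintype F] {ν : AddChar F ℤ} (hν : ν ≠ 0) (a b c : F) :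
    (∑ x, ν (x ^ 3 + a * x ^ 2 + b * x + c)) ^ 2 ≤ 4 * Fintype.card F := by
  classical
  set f : F → F := fun x => x ^ 3 + a * x ^ 2 + b * x + c
  set g : F → F := fun u => u ^ 3 + a * u ^ 2 + b * u
  set ψ : F → AddChar F ℤ := fun u => ν.compAddMonoidHom (cubePolarHom u)
  have hpolar : ∀ x u, f x + f (x + u) = g u + cubePolarHom u x := fun x u => by
    simp only [f, g, cubePolarHom, AddMonoidHom.mk'_apply]
    linear_combination (x ^ 3 + x ^ 2 * u + x * u ^ 2 + a * x ^ 2 + a * x * u + b * x + c)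
      * two_eq_zero (R := F)
  have hsq : (∑ x, ν (f x)) ^ 2 = ∑ u, ν (g u) * ∑ x, ψ u x :=
    calc (∑ x, ν (f x)) ^ 2 = ∑ x, ∑ u, ν (f x) * ν (f (x + u)) := by
          rw [sq, Finset.sum_mul_sum]
          exact Finset.sum_congr rfl fun x _ =>
            (Fintype.sum_equiv (Equiv.addLeft x) _ _ fun u => rfl).symm
      _ = ∑ x, ∑ u, ν (g u) * ψ u x := by
          simp_rw [← AddChar.map_add_eq_mul, hpolar, AddChar.map_add_eq_mul]; rfl
      _ = ∑ u, ν (g u) * ∑ x, ψ u x := by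
          rw [Finset.sum_comm]; simp_rw [Finset.mul_sum]
  calc (∑ x, ν (f x)) ^ 2
      = ∑ u, ν (g u) * if ψ u = 0 then (Fintype.card F : ℤ) else 0 := by
        simp_rw [hsq, AddChar.sum_eq_ite]
    _ ≤ ∑ u, if ψ u = 0 then (Fintype.card F : ℤ) else 0 := by
        gcongr with u
        split_ifs
        · exact mul_le_of_le_one_left (Nat.cast_nonneg _) (ν.apply_le_one _)
        · rw [mul_zero]
    _ = (Finset.univ.filter fun u => ψ u = 0).card * Fintype.card F := by
        rw [Finset.sum_ite, Finset.sum_const_zero, add_zero, Finset.sum_const, nsmul_eq_mul]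
    _ ≤ 4 * Fintype.card F := by
        gcongr
        exact_mod_cast card_cubePolarHom_trivial_le hν

end CharTwo

namespace WeierstrassCurve.Affine

variable {F : Type*} [Field F] (W : WeierstrassCurve.Affine F)

def pointEquivOption [W.IsElliptic] :
    W.Point ≃ Option {p : F × F // W.Equation p.1 p.2} where
  toFun
    | .zero => none
    | .some x y h => some ⟨(x, y), h.1⟩
  invFun
    | none => .zero
    | some ⟨(x, y), h⟩ => .some x y (W.equation_iff_nonsingular.mp h)
  left_inv P := by cases P <;> rfl
  right_inv o := by rcases o with _ | ⟨⟨x, y⟩, h⟩ <;> rfl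

lemma natCard_point [Finite F] [W.IsElliptic] :
    Nat.card W.Point = Nat.card {p : F × F // W.Equation p.1 p.2} + 1 := by
  rw [Nat.card_congr W.pointEquivOption, Finite.card_option]

lemma natCard_equation_eq_sum [Fintype F] :
    Nat.card {p : F × F // W.Equation p.1 p.2}
      = ∑ x : F, Nat.card {y : F // W.Equation x y} := by
  rw [Nat.card_congr (Equiv.subtypeProdEquivSigmaSubtype fun x y => W.Equation x y),
    Nat.card_sigma]

lemma natCard_equation_fiber_le_two [Finite F] (x : F) :
    Nat.card {y : F // W.Equation x y} ≤ 2 := by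
  by_cases h : ∃ y₀, W.Equation x y₀
  · obtain ⟨y₀, h₀⟩ := h
    calc Nat.card {y : F // W.Equation x y}
        ≤ Nat.card ({y₀, W.negY x y₀} : Set F) :=
          Nat.card_mono (Set.toFinite _) fun y hy => W.Y_eq_of_X_eq hy h₀ rfl
      _ ≤ 2 := by
          rw [Nat.card_coe_set_eq]
          exact (Set.ncard_insert_le _ _).trans (by rw [Set.ncard_singleton])
  · have : IsEmpty {y : F // W.Equation x y} := ⟨fun ⟨y, hy⟩ => h ⟨y, hy⟩⟩
    simp

lemma natCard_equation_le [Fintype F] :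
    Nat.card {p : F × F // W.Equation p.1 p.2} ≤ 2 * Fintype.card F := by
  rw [natCard_equation_eq_sum]
  calc ∑ x : F, Nat.card {y : F // W.Equation x y} ≤ ∑ _x : F, 2 :=
        Finset.sum_le_sum fun x _ => W.natCard_equation_fiber_le_two x
    _ = 2 * Fintype.card F := by
        rw [Finset.sum_const, Finset.card_univ, smul_eq_mul, mul_comm]

lemma natCard_point_le [Fintype F] [W.IsElliptic] :
    Nat.card W.Point ≤ 2 * Fintype.card F + 1 := by
  rw [natCard_point]; have := W.natCard_equation_le; omega

lemma two_dvd_natCard_point_of_a₁_ne_zero [Finite F] [CharP F 2] [W.IsElliptic]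
    (ha₁ : W.a₁ ≠ 0) :
    2 ∣ Nat.card W.Point := by
  classical
  set x₀ := W.a₃ / W.a₁
  have hx₀ : W.a₁ * x₀ = W.a₃ := mul_div_cancel₀ _ ha₁
  obtain ⟨y₀, hy₀⟩ := surjective_frobenius F 2 (x₀ ^ 3 + W.a₂ * x₀ ^ 2 + W.a₄ * x₀ + W.a₆)
  rw [frobenius_def] at hy₀
  have h2 : (2 : F) = 0 := CharTwo.two_eq_zero
  have hns : W.Nonsingular x₀ y₀ := W.equation_iff_nonsingular.mp <| by
    rw [equation_iff]; linear_combination hy₀ + y₀ * hx₀ + W.a₃ * y₀ * h2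
  have hneg : W.negY x₀ y₀ = y₀ := by
    rw [negY]; linear_combination (-y₀ - W.a₃) * h2 - hx₀
  have hP : -Point.some x₀ y₀ hns = Point.some x₀ y₀ hns := by
    simp only [Point.neg_some, hneg]
  have h2P : 2 • Point.some x₀ y₀ hns = 0 := by rw [two_nsmul, ← neg_eq_iff_add_eq_zero, hP]
  exact addOrderOf_eq_prime h2P (Point.some_ne_zero hns) ▸ addOrderOf_dvd_natCard _

lemma a₃_ne_zero_of_a₁_eq_zero [CharP F 2] [W.IsElliptic] (ha₁ : W.a₁ = 0) : W.a₃ ≠ 0 := by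
  intro ha₃
  apply W.isUnit_Δ.ne_zero
  have h2 : (2 : F) = 0 := CharTwo.two_eq_zero
  rw [Δ, b₂, b₄, b₆, b₈, ha₁, ha₃]
  -- with `a₁ = a₃ = 0` every coefficient of `Δ` is even
  linear_combination (-32 * W.a₂ ^ 3 * W.a₆ + 8 * W.a₂ ^ 2 * W.a₄ ^ 2 - 32 * W.a₄ ^ 3
    - 216 * W.a₆ ^ 2 + 144 * W.a₂ * W.a₄ * W.a₆) * h2

lemma exists_addChar_natCard_equation_eq [Fintype F] [CharP F 2] [W.IsElliptic]
    (ha₁ : W.a₁ = 0) :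
    ∃ ν : AddChar F ℤ, ν ≠ 0 ∧ (Nat.card {p : F × F // W.Equation p.1 p.2} : ℤ)
      = Fintype.card F + ∑ x, ν (x ^ 3 + W.a₂ * x ^ 2 + W.a₄ * x + W.a₆) := by
  have ha₃ := W.a₃_ne_zero_of_a₁_eq_zero ha₁
  have hν := CharTwo.index_range_sqAddMulHom ha₃
  refine ⟨_, AddSubgroup.signChar_ne_zero _ hν, ?_⟩
  have hfiber (x : F) : (Nat.card {y : F // W.Equation x y} : ℤ)
      = 1 + (CharTwo.sqAddMulHom W.a₃).range.signChar hν
        (x ^ 3 + W.a₂ * x ^ 2 + W.a₄ * x + W.a₆) := by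
    rw [← CharTwo.natCard_sqAddMulHom_fiber ha₃]
    exact congrArg _ <| Nat.card_congr <| Equiv.subtypeEquivRight fun y => by
      rw [equation_iff, ha₁, zero_mul, zero_mul, add_zero]
  simp_rw [natCard_equation_eq_sum, Nat.cast_sum, hfiber, Finset.sum_add_distrib,
    Finset.sum_const, Finset.card_univ, nsmul_one]

lemma sq_natCard_point_sub_le_of_a₁_eq_zero [Fintype F] [CharP F 2] [W.IsElliptic]
    (ha₁ : W.a₁ = 0) :
    ((Nat.card W.Point : ℤ) - 1 - Fintype.card F) ^ 2 ≤ 4 * Fintype.card F := by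
  obtain ⟨ν, hν, hcount⟩ := W.exists_addChar_natCard_equation_eq ha₁
  rw [natCard_point, Nat.cast_add, hcount, Nat.cast_one]
  convert CharTwo.sq_sum_addChar_cubic_le hν W.a₂ W.a₄ W.a₆ using 2
  ring

end WeierstrassCurve.Affine

open Classical in
theorem stmt_5_general {F : Type*} [Field F] [Fintype F] (m n d : ℕ)
    (hodd : Odd (m * n)) (hbig : 25 < m * n)
    (hd4 : d ≤ 4) (hcard : Fintype.card F = 2 ^ d)
    (W : WeierstrassCurve.Affine F) [W.IsElliptic] :
    ¬ ∃ f : (ZMod m × ZMod n) →+ W.Point, Function.Injective f := by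
  rintro ⟨f, hf⟩
  have : CharP F 2 := charP_of_card_eq_prime_pow hcard
  have hq : Fintype.card F ≤ 16 := hcard ▸ Nat.pow_le_pow_right two_pos hd4
  have hdvd : m * n ∣ Nat.card W.Point := by
    simpa [Nat.card_prod, Nat.card_zmod] using AddSubgroup.card_dvd_of_injective f hf
  have hpos : 0 < Nat.card W.Point := by rw [W.natCard_point]; omega
  have hle : Nat.card W.Point ≤ 33 := by have := W.natCard_point_le; omega
  have hmn : 27 ≤ m * n := by obtain ⟨k, hk⟩ := hodd; omega
  by_cases ha₁ : W.a₁ = 0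
  · have hle25 : Nat.card W.Point ≤ 25 := by
      have hHasse := W.sq_natCard_point_sub_le_of_a₁_eq_zero ha₁
      nlinarith
    have := Nat.le_of_dvd hpos hdvd
    omega
  · have h2mn : 2 * (m * n) ∣ Nat.card W.Point :=
      (Nat.coprime_two_left.mpr hodd).mul_dvd_of_dvd_of_dvd
        (W.two_dvd_natCard_point_of_a₁_ne_zero ha₁) hdvd
    have := Nat.le_of_dvd hpos h2mn
    omega

open Classical in
/-- Let `m ∣ n` with `m * n` odd and `m * n > 25`, and `1 ≤ d ≤ 4`. Then no elliptic curve
over the field with `2 ^ d` elements has a subgroup of rational points isomorphic to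
`ZMod m × ZMod n`. -/
theorem stmt_5 {F : Type*} [Field F] [Fintype F] (m n d : ℕ) (hm : 0 < m)
    (hmn : m ∣ n) (hodd : Odd (m * n)) (hbig : 25 < m * n)
    (hd1 : 1 ≤ d) (hd4 : d ≤ 4) (hcard : Fintype.card F = 2 ^ d)
    (W : WeierstrassCurve.Affine F) [W.IsElliptic] :
    ¬ ∃ f : (ZMod m × ZMod n) →+ W.Point, Function.Injective f :=
  stmt_5_general m n d hodd hbig hd4 hcard W
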